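/- arXiv:1501.03939 — 2 statements merged into one kernel-verified Lean document; each statement's English description precedes it below -/
import Mathlib

section
/- Let Ω = C(ℝ₊, ℝ^d) be the canonical space with canonical filtration F, let E be a Polish space, and let Y : ℝ₊ × Ω → E be a stochastic process. Then the following statements are equivalent: (i) Y is F-predictable; (ii) Y is F-optional; (iii) Y is F-progressively measurable; (iv) Y is B(ℝ₊) ⊗ 𝓕-measurable and F-adapted; (v) Y is B(ℝ₊) ⊗ 𝓕-measurable and satisfies Y_s(ω) = Y_s([ω]_s) for all (s, ω) ∈ ℝ₊ × Ω. -/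
open MeasureTheory
open scoped NNReal

noncomputable section

/-- The canonical space `Ω = C(ℝ₊, ℝ^d)` of continuous paths. -/
abbrev CanonSp (d : ℕ) := C(ℝ≥0, EuclideanSpace ℝ (Fin d))

/-- The Borel σ-field `𝓕` of the canonical space. -/
instance (d : ℕ) : MeasurableSpace (CanonSp d) := borel _
instance (d : ℕ) : BorelSpace (CanonSp d) := ⟨rfl⟩

/-- The canonical (raw) filtration `F_s = σ(B_u, u ≤ s)` on the canonical space. -/
def canonFil (d : ℕ) : Filtration ℝ≥0 (inferInstance : MeasurableSpace (CanonSp d)) where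
  seq s := ⨆ u ∈ Set.Iic s, MeasurableSpace.comap (fun ω : CanonSp d => ω u) inferInstance
  mono' := fun s t hst => biSup_mono fun u (hu : u ≤ s) => hu.trans hst
  le' := fun _s => iSup₂_le fun u _ =>
    Measurable.comap_le (ContinuousEvalConst.continuous_eval_const u).measurable

/-- The stopped path `[ω]_t = (ω(t ∧ s))_{s ≥ 0}`. -/
def stoppedPath {d : ℕ} (ω : CanonSp d) (t : ℝ≥0) : CanonSp d :=
  ω.comp ⟨fun s => min t s, continuous_const.min continuous_id⟩

/-- The predictable σ-algebra on `ℝ₊ × α` associated with a filtration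
`G = (G_s)`: it is generated by the sets `{0} × A` with `A ∈ G_0` and
`(u, v] × A` with `u < v` and `A ∈ G_u`. -/
def predictableSigma {α : Type*} (G : ℝ≥0 → MeasurableSpace α) :
    MeasurableSpace (ℝ≥0 × α) :=
  MeasurableSpace.generateFrom
    ({S | ∃ A : Set α, MeasurableSet[G 0] A ∧ S = ({0} : Set ℝ≥0) ×ˢ A} ∪
     {S | ∃ (u v : ℝ≥0) (A : Set α), u < v ∧ MeasurableSet[G u] A ∧ S = Set.Ioc u v ×ˢ A})

/-- The optional σ-algebra on `ℝ₊ × α` associated with a filtration `G = (G_s)`: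
it is generated by the right-continuous `(G_s)`-adapted real-valued processes. -/
def optionalSigma {α : Type*} (G : ℝ≥0 → MeasurableSpace α) :
    MeasurableSpace (ℝ≥0 × α) :=
  MeasurableSpace.generateFrom
    {S | ∃ Z : ℝ≥0 → α → ℝ,
      (∀ u, Measurable[G u] (Z u)) ∧
      (∀ ω, ∀ u : ℝ≥0, ContinuousWithinAt (fun v => Z v ω) (Set.Ici u) u) ∧
      MeasurableSet[MeasurableSpace.comap (fun p : ℝ≥0 × α => Z p.1 p.2) inferInstance] S}

/-- A process `Y` is progressively measurable for the filtration `G = (G_s)` if for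
every `t` its restriction to `[0, t] × α` is `B([0, t]) ⊗ G_t`-measurable. -/
def ProgMeas {α E : Type*} [MeasurableSpace E] (G : ℝ≥0 → MeasurableSpace α)
    (Y : ℝ≥0 → α → E) : Prop :=
  ∀ t : ℝ≥0,
    Measurable[(inferInstance : MeasurableSpace (Set.Iic t)).prod (G t)]
      (fun p : Set.Iic t × α => Y p.1.1 p.2)

/-!
The first three implications hold for every filtration. Each generator of the predictable
σ-algebra is a difference of sets `[a, ∞) × A` with `A ∈ G_a`, i.e. of level sets of
right-continuous adapted indicator processes, so predictable ⊆ optional. Approximating time from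
the right by dyadics, right-continuous adapted processes are progressive, and progressive
processes are jointly measurable and adapted.

On the canonical space `F_s ⊆ σ(ω ↦ [ω]_s)`, so an adapted process only sees the stopped path.
Conversely `(t, ω) ↦ (t, [ω]_t)` is predictable: the Borel σ-field of the Polish space `Ω` is
generated by evaluations at a countable dense set of times, and each `(t, ω) ↦ ω (t ∧ u)` is
continuous and adapted, hence predictable by dyadic approximation of time from the left. Thus
`Y = Y ∘ (t, [ω]_t)` is predictable as soon as `Y` is jointly measurable.
-/

open Set Filter Topology

section Dyadic

variable (n : ℕ) (t : ℝ≥0)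

def dyadicUpper : ℝ≥0 := ⌈t * 2 ^ n⌉₊ / 2 ^ n

-- Truncated subtraction gives `dyadicLower n 0 = 0`, matching the generators `{0} ×ˢ A` of the
-- predictable σ-algebra.
def dyadicLower : ℝ≥0 := (⌈t * 2 ^ n⌉₊ - 1 : ℕ) / 2 ^ n

lemma le_dyadicUpper : t ≤ dyadicUpper n t := by
  rw [dyadicUpper, le_div_iff₀ (by positivity)]
  exact Nat.le_ceil _

lemma dyadicUpper_le : dyadicUpper n t ≤ t + (2 ^ n)⁻¹ := by
  rw [dyadicUpper, div_le_iff₀ (by positivity), add_mul, inv_mul_cancel₀ (by positivity)]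
  exact (Nat.ceil_lt_add_one (by positivity)).le

lemma tendsto_two_pow_inv : Tendsto (fun n : ℕ => ((2 : ℝ≥0) ^ n)⁻¹) atTop (𝓝 0) := by
  simpa only [inv_pow] using
    NNReal.tendsto_pow_atTop_nhds_zero_of_lt_one (by norm_num : (2 : ℝ≥0)⁻¹ < 1)

lemma tendsto_dyadicUpper : Tendsto (dyadicUpper · t) atTop (𝓝[≥] t) :=
  tendsto_nhdsWithin_iff.2
    ⟨tendsto_of_tendsto_of_tendsto_of_le_of_le tendsto_const_nhds
      (by simpa using tendsto_const_nhds.add tendsto_two_pow_inv)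
      (le_dyadicUpper · t) (dyadicUpper_le · t),
    .of_forall (le_dyadicUpper · t)⟩

lemma dyadicLower_eq : dyadicLower n t = dyadicUpper n t - (2 ^ n)⁻¹ := by
  rw [dyadicLower, dyadicUpper, Nat.cast_tsub, NNReal.sub_div, Nat.cast_one, one_div]

lemma tendsto_dyadicLower : Tendsto (dyadicLower · t) atTop (𝓝 t) := by
  simpa [dyadicLower_eq] using
    ((tendsto_dyadicUpper t).mono_right nhdsWithin_le_nhds).sub tendsto_two_pow_inv

lemma setOf_ceil_mul_two_pow_eq_zero : {t : ℝ≥0 | ⌈t * 2 ^ n⌉₊ = 0} = {0} := by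
  ext t
  simp

lemma setOf_ceil_mul_two_pow_eq_succ (k : ℕ) :
    {t : ℝ≥0 | ⌈t * 2 ^ n⌉₊ = k + 1} = Ioc ((k : ℝ≥0) / 2 ^ n) ((k + 1) / 2 ^ n) := by
  ext t
  rw [mem_ofPred_eq, Nat.ceil_eq_iff k.succ_ne_zero, mem_Ioc, div_lt_iff₀ (by positivity),
    le_div_iff₀ (by positivity)]
  simp

end Dyadic

section Predictable

variable {α : Type*} {G : ℝ≥0 → MeasurableSpace α}

lemma measurableSet_predictableSigma_ceil_prod {n k : ℕ} {A : Set α}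
    (hA : MeasurableSet[G ((k - 1 : ℕ) / 2 ^ n)] A) :
    MeasurableSet[predictableSigma G] ({t : ℝ≥0 | ⌈t * 2 ^ n⌉₊ = k} ×ˢ A) := by
  apply MeasurableSpace.measurableSet_generateFrom
  cases k with
  | zero =>
    refine Or.inl ⟨A, by convert hA; simp, ?_⟩
    rw [setOf_ceil_mul_two_pow_eq_zero]
  | succ k =>
    refine Or.inr ⟨k / 2 ^ n, (k + 1) / 2 ^ n, A, ?_, by simpa using hA, ?_⟩
    · exact div_lt_div_of_pos_right (lt_add_one _) (by positivity)
    · rw [setOf_ceil_mul_two_pow_eq_succ]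

theorem measurable_predictableSigma_of_continuous {E : Type*} [TopologicalSpace E]
    [TopologicalSpace.PseudoMetrizableSpace E] [MeasurableSpace E] [BorelSpace E]
    {Z : ℝ≥0 → α → E} (hZ : ∀ u, Measurable[G u] (Z u)) (hc : ∀ a, Continuous fun u => Z u a) :
    Measurable[predictableSigma G] fun p : ℝ≥0 × α => Z p.1 p.2 := by
  let := predictableSigma G
  refine measurable_of_tendsto_metrizable
    (f := fun (n : ℕ) (p : ℝ≥0 × α) => Z (dyadicLower n p.1) p.2) (fun n s hs => ?_)
    (tendsto_pi_nhds.2 fun p => ((hc p.2).tendsto p.1).comp (tendsto_dyadicLower p.1))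
  have : (fun p : ℝ≥0 × α => Z (dyadicLower n p.1) p.2) ⁻¹' s =
      ⋃ k : ℕ, {t : ℝ≥0 | ⌈t * 2 ^ n⌉₊ = k} ×ˢ (Z ((k - 1 : ℕ) / 2 ^ n) ⁻¹' s) := by
    ext ⟨t, a⟩
    simp [dyadicLower]
  rw [this]
  exact .iUnion fun k => measurableSet_predictableSigma_ceil_prod (hZ _ hs)

end Predictable

section Optional

variable {α : Type*} {G : ℝ≥0 → MeasurableSpace α}

lemma measurableSet_Ici_prod_optionalSigma (hG : Monotone G) {a : ℝ≥0} {A : Set α}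
    (hA : MeasurableSet[G a] A) : MeasurableSet[optionalSigma G] (Ici a ×ˢ A) := by
  let Z : ℝ≥0 → α → ℝ := fun v ω => if a ≤ v then A.indicator (fun _ => 1) ω else 0
  refine MeasurableSpace.measurableSet_generateFrom ⟨Z, fun v => ?_, fun ω u => ?_, {1},
    measurableSet_singleton 1, ?_⟩
  · by_cases hav : a ≤ v
    · simpa [Z, hav] using
        (measurable_const : Measurable[G v] fun _ : α => (1 : ℝ)).indicator (hG hav _ hA)
    · simp [Z, hav]
  · by_cases hau : a ≤ u
    · exact continuousWithinAt_const.congr (fun v hv => if_pos (hau.trans hv)) (if_pos hau)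
    · refine ((continuousAt_const (y := (0 : ℝ))).congr ?_).continuousWithinAt
      filter_upwards [Iio_mem_nhds (not_le.1 hau)] with v hv
      exact (if_neg (not_le.2 hv)).symm
  · ext ⟨v, ω⟩
    by_cases hav : a ≤ v <;> by_cases hω : ω ∈ A <;> simp [Z, hav, hω]

lemma measurableSet_Ioi_prod_optionalSigma (hG : Monotone G) {a : ℝ≥0} {A : Set α}
    (hA : MeasurableSet[G a] A) : MeasurableSet[optionalSigma G] (Ioi a ×ˢ A) := by
  rw [← iUnion_Ici_eq_Ioi_of_lt_of_tendsto (f := fun n : ℕ => a + 1 / (n + 1))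
    (fun n => lt_add_of_pos_right a (by positivity))
    (by simpa using tendsto_const_nhds.add (tendsto_one_div_add_atTop_nhds_zero_nat (𝕜 := ℝ≥0))),
    iUnion_prod_const]
  exact .iUnion fun n => measurableSet_Ici_prod_optionalSigma hG (hG le_self_add _ hA)

theorem predictableSigma_le_optionalSigma (hG : Monotone G) :
    predictableSigma G ≤ optionalSigma G := by
  refine MeasurableSpace.generateFrom_le ?_
  rintro _ (⟨A, hA, rfl⟩ | ⟨u, v, A, huv, hA, rfl⟩)
  · have : Ici 0 ×ˢ A \ Ioi 0 ×ˢ univ = ({0} : Set ℝ≥0) ×ˢ A := by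
      ext ⟨t, ω⟩
      simp [pos_iff_ne_zero, and_comm]
    rw [← this]
    exact (measurableSet_Ici_prod_optionalSigma hG hA).diff
      (measurableSet_Ioi_prod_optionalSigma hG MeasurableSet.univ)
  · have : Ioi u ×ˢ A \ Ioi v ×ˢ univ = Ioc u v ×ˢ A := by
      simp [prod_sdiff_prod]
    rw [← this]
    exact (measurableSet_Ioi_prod_optionalSigma hG hA).diff
      (measurableSet_Ioi_prod_optionalSigma hG MeasurableSet.univ)

end Optional

section Progressive

variable {α E : Type*} {G : ℝ≥0 → MeasurableSpace α}

theorem progMeas_of_continuousWithinAt [TopologicalSpace E]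
    [TopologicalSpace.PseudoMetrizableSpace E] [MeasurableSpace E] [BorelSpace E]
    (hG : Monotone G) {Z : ℝ≥0 → α → E} (hZ : ∀ u, Measurable[G u] (Z u))
    (hc : ∀ a u, ContinuousWithinAt (fun v => Z v a) (Ici u) u) : ProgMeas G Z := by
  intro t
  let := G t
  refine measurable_of_tendsto_metrizable
    (f := fun (n : ℕ) (p : Iic t × α) => Z (min t (dyadicUpper n p.1)) p.2) (fun n => ?_)
    (tendsto_pi_nhds.2 fun p => (hc p.2 p.1).tendsto.comp ?_)
  · have hF : Measurable fun q : ℕ × α => Z (min t (q.1 / 2 ^ n)) q.2 :=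
      measurable_from_prod_countable_right fun k =>
        (hZ (min t (k / 2 ^ n))).mono (hG (min_le_left _ _)) le_rfl
    have hceil : Measurable fun p : Iic t × α => ⌈(p.1 : ℝ≥0) * 2 ^ n⌉₊ :=
      Nat.measurable_ceil.comp ((measurable_subtype_coe.comp measurable_fst).mul_const _)
    exact (hF.comp (hceil.prodMk measurable_snd) :)
  · have hmin : Tendsto (fun n => min t (dyadicUpper n p.1)) atTop (𝓝 (min t p.1)) :=
      tendsto_const_nhds.min ((tendsto_dyadicUpper p.1).mono_right nhdsWithin_le_nhds)
    rw [min_eq_right p.1.2] at hmin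
    exact tendsto_nhdsWithin_iff.2
      ⟨hmin, .of_forall fun n => le_min p.1.2 (le_dyadicUpper n p.1)⟩

theorem ProgMeas.of_measurable_optionalSigma [MeasurableSpace E] (hG : Monotone G)
    {Y : ℝ≥0 → α → E} (hY : Measurable[optionalSigma G] fun p : ℝ≥0 × α => Y p.1 p.2) :
    ProgMeas G Y := by
  intro t
  let := G t
  refine hY.comp (measurable_generateFrom ?_) (f := fun p : Iic t × α => ((p.1 : ℝ≥0), p.2))
  rintro _ ⟨Z, hZ, hc, B, hB, rfl⟩
  exact progMeas_of_continuousWithinAt hG hZ hc t hB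

theorem ProgMeas.measurable [MeasurableSpace E] {m : MeasurableSpace α} (hG : ∀ t, G t ≤ m)
    {Y : ℝ≥0 → α → E} (hY : ProgMeas G Y) : Measurable fun p : ℝ≥0 × α => Y p.1 p.2 := by
  have hk : ∀ k : ℕ, Measurable fun p : ℝ≥0 × α => Y (min p.1 k) p.2 := fun k =>
    have hmin : Measurable fun p : ℝ≥0 × α => (⟨min p.1 k, min_le_right p.1 _⟩ : Iic (k : ℝ≥0)) :=
      (measurable_fst.min measurable_const).subtype_mk
    (hY k).comp (hmin.prodMk (measurable_snd.mono le_rfl (hG k)))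
  have := (measurable_from_prod_countable_right
    (f := fun q : ℕ × (ℝ≥0 × α) => Y (min q.2.1 q.1) q.2.2) hk).comp
    ((Nat.measurable_ceil.comp measurable_fst).prodMk measurable_id)
  simpa [Function.comp_def, min_eq_left (Nat.le_ceil _)] using this

theorem ProgMeas.adapted [MeasurableSpace E] {Y : ℝ≥0 → α → E} (hY : ProgMeas G Y) (t : ℝ≥0) :
    Measurable[G t] (Y t) := by
  let := G t
  exact (hY t).comp (measurable_prodMk_left : Measurable (Prod.mk (⟨t, mem_Iic.2 le_rfl⟩ : Iic t)))

end Progressive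

theorem apply_eq_apply_of_measurable_comap {α β γ : Type*} [MeasurableSpace β]
    [MeasurableSpace γ] [MeasurableSingletonClass γ] {g : α → β} {f : α → γ}
    (hf : Measurable[MeasurableSpace.comap g ‹_›] f) {x y : α} (hxy : g x = g y) : f x = f y := by
  obtain ⟨B, -, hB⟩ := hf (measurableSet_singleton (f y))
  have hy : y ∈ g ⁻¹' B := hB ▸ rfl
  rw [mem_preimage, ← hxy, ← mem_preimage, hB] at hy
  exact hy

theorem ContinuousMap.measurable_of_forall_measurable_eval {T F Z : Type*} [TopologicalSpace T]
    [TopologicalSpace.SeparableSpace T] [TopologicalSpace F] [T2Space F]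
    [SecondCountableTopology F] [MeasurableSpace F] [BorelSpace F] [PolishSpace C(T, F)]
    [MeasurableSpace C(T, F)] [BorelSpace C(T, F)] [MeasurableSpace Z] {g : Z → C(T, F)}
    (hg : ∀ t, Measurable fun z => g z t) : Measurable g := by
  obtain ⟨S, hSc, hSd⟩ := TopologicalSpace.exists_countable_dense T
  have := hSc.to_subtype
  have hJ : MeasurableEmbedding fun (ω : C(T, F)) (s : S) => ω s :=
    Continuous.measurableEmbedding (continuous_pi fun s => continuous_eval_const _)
      fun ω ω' h => ContinuousMap.coe_injective <|
        Continuous.ext_on hSd ω.continuous ω'.continuous fun s hs => congrFun h ⟨s, hs⟩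
  exact hJ.measurable_comp_iff.1 (measurable_pi_lambda _ fun s => hg s)

section Canonical

variable {d : ℕ}

theorem measurable_eval_canonFil {r s : ℝ≥0} (hrs : r ≤ s) :
    Measurable[canonFil d s] fun ω : CanonSp d => ω r :=
  Measurable.of_comap_le <| le_biSup
    (fun u => MeasurableSpace.comap (fun ω : CanonSp d => ω u) inferInstance) hrs

theorem measurable_stoppedPath_predictableSigma :
    Measurable[predictableSigma (canonFil d ·)]
      fun p : ℝ≥0 × CanonSp d => (p.1, stoppedPath p.2 p.1) := by
  let := predictableSigma (canonFil d ·)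
  refine .prodMk ?_ (ContinuousMap.measurable_of_forall_measurable_eval fun u => ?_)
  · exact measurable_predictableSigma_of_continuous (Z := fun u (_ : CanonSp d) => u)
      (fun _ => measurable_const) fun _ => continuous_id
  · exact measurable_predictableSigma_of_continuous (Z := fun v (ω : CanonSp d) => ω (min v u))
      (fun v => measurable_eval_canonFil (min_le_left v u))
      fun ω => ω.continuous.comp (continuous_id.min continuous_const)

theorem canonFil_le_comap_stoppedPath (s : ℝ≥0) :
    canonFil d s ≤ MeasurableSpace.comap (stoppedPath · s) inferInstance := by
  refine iSup₂_le fun r (hr : r ≤ s) => ?_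
  have : (fun ω : CanonSp d => ω r) = (fun ω => ω r) ∘ (stoppedPath · s) := by
    ext ω
    simp [stoppedPath, min_eq_right hr]
  rw [this, ← MeasurableSpace.comap_comp]
  exact MeasurableSpace.comap_mono (continuous_eval_const r).measurable.comap_le

theorem stoppedPath_stoppedPath (ω : CanonSp d) (s : ℝ≥0) :
    stoppedPath (stoppedPath ω s) s = stoppedPath ω s := by
  ext u
  simp [stoppedPath]

theorem apply_stoppedPath_of_measurable_canonFil {E : Type*} [MeasurableSpace E]
    [MeasurableSingletonClass E] {s : ℝ≥0} {f : CanonSp d → E} (hf : Measurable[canonFil d s] f)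
    (ω : CanonSp d) : f ω = f (stoppedPath ω s) :=
  apply_eq_apply_of_measurable_comap (hf.mono (canonFil_le_comap_stoppedPath s) le_rfl)
    (stoppedPath_stoppedPath ω s).symm

end Canonical

/-- For a process `Y : ℝ₊ × Ω → E` on the canonical space `Ω`
with canonical filtration `F` and Polish target `E`, the following are equivalent:
(i) `Y` is `F`-predictable; (ii) `Y` is `F`-optional; (iii) `Y` is `F`-progressively
measurable; (iv) `Y` is `B(ℝ₊) ⊗ 𝓕`-measurable and `F`-adapted; (v) `Y` is
`B(ℝ₊) ⊗ 𝓕`-measurable and `Y_s(ω) = Y_s([ω]_s)` for all `(s, ω)`. -/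
theorem canonical_measurability_tfae {d : ℕ}
    {E : Type*} [MeasurableSpace E] [TopologicalSpace E] [PolishSpace E] [BorelSpace E]
    (Y : ℝ≥0 → CanonSp d → E) :
    [Measurable[predictableSigma (fun s => canonFil d s)]
        (fun p : ℝ≥0 × CanonSp d => Y p.1 p.2),
      Measurable[optionalSigma (fun s => canonFil d s)]
        (fun p : ℝ≥0 × CanonSp d => Y p.1 p.2),
      ProgMeas (fun s => canonFil d s) Y,
      Measurable (fun p : ℝ≥0 × CanonSp d => Y p.1 p.2) ∧
        (∀ s, Measurable[canonFil d s] (Y s)),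
      Measurable (fun p : ℝ≥0 × CanonSp d => Y p.1 p.2) ∧
        (∀ (s : ℝ≥0) (ω : CanonSp d), Y s ω = Y s (stoppedPath ω s))].TFAE := by
  tfae_have 1 → 2 := fun h =>
    h.mono (predictableSigma_le_optionalSigma (canonFil d).mono') le_rfl
  tfae_have 2 → 3 := ProgMeas.of_measurable_optionalSigma (canonFil d).mono'
  tfae_have 3 → 4 := fun h => ⟨h.measurable (canonFil d).le, h.adapted⟩
  tfae_have 4 → 5 := fun ⟨hY, hadapted⟩ =>
    ⟨hY, fun s => apply_stoppedPath_of_measurable_canonFil (hadapted s)⟩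
  tfae_have 5 → 1 := fun ⟨hY, hstopped⟩ => by
    have : (fun p : ℝ≥0 × CanonSp d => Y p.1 p.2) =
        (fun p => Y p.1 p.2) ∘ fun p => (p.1, stoppedPath p.2 p.1) :=
      funext fun p => hstopped p.1 p.2
    rw [this]
    exact hY.comp measurable_stoppedPath_predictableSigma
  tfae_finish
end
end

section
/- Let Ω = C(ℝ₊, ℝ^d) be the canonical space with canonical filtration F and Wiener measure P, let U be a Polish space, ν a U-valued F-predictable process, η a finite-valued F-stopping time, and (P_w)_{w∈Ω} a regular conditional probability of P given F_η. Then for P-almost every w ∈ Ω, P_w( ν_s = ν^{η(w),w}_s for all s ≥ 0 ) = 1, where ν^{t,w}_s(ω) := ν_s(w ⊗_t ω) denotes the shifted control. -/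
open MeasureTheory ProbabilityTheory
open scoped NNReal

noncomputable section

/-- The σ-algebra generated by the collection `N^P` of `P`-negligible sets. -/
def nullSigma {α : Type*} {m : MeasurableSpace α} (P : @Measure α m) : MeasurableSpace α :=
  MeasurableSpace.generateFrom {A | ∃ N, MeasurableSet[m] N ∧ P N = 0 ∧ A ⊆ N}

/-- The `P`-augmented canonical filtration `F^P_s := F_s ∨ N^P`. -/
def augFil (d : ℕ) (P : Measure (CanonSp d)) :
    Filtration ℝ≥0 (⊤ : MeasurableSpace (CanonSp d)) where
  seq s := canonFil d s ⊔ nullSigma P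
  mono' := fun s t hst => sup_le_sup_right ((canonFil d).mono hst) _
  le' := fun _ => le_top

/-- The concatenated path `w ⊗_t ω`, equal to `w` on `[0, t]` and to
`s ↦ w(t) + ω(s) - ω(t)` on `[t, ∞)`. -/
def concatPath {d : ℕ} (w : CanonSp d) (t : ℝ≥0) (ω : CanonSp d) : CanonSp d :=
  ⟨fun s => w (min s t) + ω (max s t) - ω t, by
    refine Continuous.sub (Continuous.add ?_ ?_) continuous_const
    · exact w.continuous.comp (continuous_id.min continuous_const)
    · exact ω.continuous.comp (continuous_id.max continuous_const)⟩

/-- `P` is the Wiener measure on the canonical space: it is a probability measure,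
the canonical process starts at `0` a.s., its increments after time `s` are
independent of `F_s`, and the increment `B_t - B_s` is a `d`-dimensional centered
Gaussian vector of covariance `(t-s) Id`. -/
def IsWienerMeasure (d : ℕ) (P : Measure (CanonSp d)) : Prop :=
  IsProbabilityMeasure P ∧
  (∀ᵐ ω ∂P, ω 0 = 0) ∧
  (∀ s t : ℝ≥0, s ≤ t →
    Indep (MeasurableSpace.comap (fun ω : CanonSp d => ω t - ω s) inferInstance)
      (canonFil d s) P) ∧
  (∀ s t : ℝ≥0, s ≤ t →
    P.map (fun ω : CanonSp d => (EuclideanSpace.equiv (Fin d) ℝ) (ω t - ω s)) =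
      Measure.pi fun _ : Fin d => gaussianReal 0 (t - s))

/-- `(P_w)_{w}` is a regular conditional probability of `P` given the
sub-σ-algebra `G`. -/
def IsRCP {α : Type*} {m : MeasurableSpace α} (P : @Measure α m)
    (G : MeasurableSpace α) (Pw : α → @Measure α m) : Prop :=
  (∀ w, IsProbabilityMeasure (Pw w)) ∧
  (∀ A : Set α, MeasurableSet[m] A → Measurable[G] fun w => Pw w A) ∧
  (∀ A : Set α, MeasurableSet[m] A → ∀ B : Set α, MeasurableSet[G] B →
    P (A ∩ B) = ∫⁻ w in B, Pw w A ∂P)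

/-! For a.e. `w`, the conditional law `P_w` given `F_η` is carried by the paths `ω` with
`η ω = η w` that coincide with `w` up to time `η w`: this holds for each of countably many
`F_η`-measurable coordinates (the value of `η` and the stopped path at a dense sequence of times),
because an r.c.p. gives probability `1_B(w)` to every `B ∈ F_η`. For such `ω`, `w ⊗_{η w} ω = ω`,
so the shifted control agrees with `ν` at `ω` at every time. -/

open TopologicalSpace (denseSeq denseRange_denseSeq)

namespace IsRCP

variable {α : Type*} {G : MeasurableSpace α} [m : MeasurableSpace α] {P : Measure α}
  {Pw : α → Measure α}

lemma ae_measure_compl_eq_zero (hG : G ≤ m) (hPw : IsRCP P G Pw) {B : Set α}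
    (hB : MeasurableSet[G] B) : ∀ᵐ w ∂P, w ∈ B → Pw w Bᶜ = 0 := by
  have hBc : MeasurableSet Bᶜ := (hG B hB).compl
  refine (setLIntegral_eq_zero_iff (hG B hB) ((hPw.2.1 _ hBc).mono hG le_rfl)).mp ?_
  rw [← hPw.2.2 _ hBc B hB, Set.compl_inter_self, measure_empty]

lemma ae_ae_eq_of_measurable {β : Type*} [MeasurableSpace β]
    [MeasurableSpace.CountablySeparated β] (hG : G ≤ m) (hPw : IsRCP P G Pw) {f : α → β} (hf : Measurable[G] f) :
    ∀ᵐ w ∂P, ∀ᵐ ω ∂Pw w, f ω = f w := by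
  obtain ⟨S, hSm, hS⟩ := exists_seq_separating β MeasurableSet.empty Set.univ
  have hfS : ∀ n, MeasurableSet[G] (f ⁻¹' S n) := fun n => hf (hSm n)
  filter_upwards [ae_all_iff.2 fun n => (hPw.ae_measure_compl_eq_zero hG (hfS n)).and
    (hPw.ae_measure_compl_eq_zero hG (hfS n).compl)] with w hw
  have hsame : ∀ n, ∀ᵐ ω ∂Pw w, (f ω ∈ S n ↔ f w ∈ S n) := by
    intro n
    refine ae_iff.2 ?_
    by_cases hwn : f w ∈ S n
    · exact measure_mono_null (fun ω hω hωS => hω (iff_of_true hωS hwn)) ((hw n).1 hwn)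
    · exact measure_mono_null (fun ω hω hωS => hω (iff_of_false hωS hwn)) ((hw n).2 hwn)
  filter_upwards [ae_all_iff.2 hsame] with ω hω
  exact hS _ trivial _ trivial hω

end IsRCP

section CanonicalSpace

variable {d : ℕ}

lemma measurable_canonFil_eval {s t : ℝ≥0} (hst : s ≤ t) :
    Measurable[canonFil d t] fun ω : CanonSp d => ω s :=
  measurable_iff_comap_le.mpr
    (le_biSup (fun u => MeasurableSpace.comap (fun ω : CanonSp d => ω u) inferInstance) hst)

lemma measurable_stoppedPath_apply {η : CanonSp d → ℝ≥0}
    (hη : IsStoppingTime (canonFil d) fun ω => (η ω : WithTop ℝ≥0)) (s : ℝ≥0) :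
    Measurable[hη.measurableSpace] fun ω => stoppedPath ω (η ω) s := by
  have hadapted : StronglyAdapted (canonFil d) fun t (ω : CanonSp d) => ω (min t s) :=
    fun t => (measurable_canonFil_eval (min_le_left t s)).stronglyMeasurable
  exact measurable_stoppedValue (hadapted.isStronglyProgressive_of_continuous
    fun ω => ω.continuous.comp (continuous_id.min continuous_const)) hη

lemma stoppedPath_eq_of_forall_denseSeq {ω w : CanonSp d} {t : ℝ≥0}
    (h : ∀ n, stoppedPath ω t (denseSeq ℝ≥0 n) =
      stoppedPath w t (denseSeq ℝ≥0 n)) :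
    stoppedPath ω t = stoppedPath w t :=
  DFunLike.coe_injective <| (stoppedPath ω t).continuous.ext_on
    (denseRange_denseSeq ℝ≥0) (stoppedPath w t).continuous
    (by rintro _ ⟨n, rfl⟩; exact h n)

lemma concatPath_eq_self_of_stoppedPath_eq {ω w : CanonSp d} {t : ℝ≥0}
    (h : stoppedPath ω t = stoppedPath w t) : concatPath w t ω = ω := by
  have hagree : ∀ s, ω (min t s) = w (min t s) := DFunLike.congr_fun h
  ext1 s
  change w (min s t) + ω (max s t) - ω t = ω s
  rcases le_total s t with hst | hts
  · rw [min_eq_left hst, max_eq_right hst, add_sub_cancel_right, ← min_eq_right hst,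
      hagree]
  · rw [min_eq_right hts, max_eq_left hts, ← min_self t, ← hagree, min_self,
      add_sub_cancel_left]

end CanonicalSpace

theorem rcp_shifted_control_eq_general {d : ℕ}
    (P : Measure (CanonSp d)) {U : Type*} (ν : ℝ≥0 → CanonSp d → U)
    (η : CanonSp d → ℝ≥0) (hη : IsStoppingTime (canonFil d) (fun ω => (η ω : WithTop ℝ≥0)))
    (Pw : CanonSp d → Measure (CanonSp d))
    (hPw : IsRCP P hη.measurableSpace Pw) :
    ∀ᵐ w ∂P,
      Pw w {ω | ∀ s : ℝ≥0, ν s ω = ν s (concatPath w (η w) ω)} = 1 := by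
  -- `X ω` determines `η ω` and the path `ω` stopped at `η ω`
  let X : CanonSp d → ℝ≥0 × (ℕ → EuclideanSpace ℝ (Fin d)) := fun ω =>
    (η ω, fun n => stoppedPath ω (η ω) (denseSeq ℝ≥0 n))
  have hX : Measurable[hη.measurableSpace] X := by
    -- make `F_η` the σ-algebra found by instance search
    let := hη.measurableSpace
    exact hη.measurable.untopA.prodMk
      (measurable_pi_lambda _ fun n => measurable_stoppedPath_apply hη _)
  filter_upwards [hPw.ae_ae_eq_of_measurable hη.measurableSpace_le hX] with w hw
  have hconcat : ∀ᵐ ω ∂Pw w, concatPath w (η w) ω = ω := by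
    filter_upwards [hw] with ω hω
    obtain ⟨hηω, hpath⟩ := Prod.mk.inj hω
    rw [hηω] at hpath
    exact concatPath_eq_self_of_stoppedPath_eq
      (stoppedPath_eq_of_forall_denseSeq (congrFun hpath))
  have := hPw.1 w
  refine (measure_congr (ae_eq_univ.2 (ae_iff.1 ?_))).trans measure_univ
  filter_upwards [hconcat] with ω hω s
  rw [hω]

/-- On the canonical space with Wiener measure `P`, let `ν` be a
`U`-valued `F`-predictable control (`U` Polish), `η` a (finite-valued) stopping
time of the canonical filtration `F`, and `(P_w)` an r.c.p. of `P` given `F_η`.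
Then for `P`-a.e. `w`, `P_w(ν_s = ν^{η(w),w}_s` for all `s ≥ 0) = 1`, where
`ν^{t,w}_s(ω) := ν_s(w ⊗_t ω)` is the shifted control. -/
theorem rcp_shifted_control_eq {d : ℕ}
    (P : Measure (CanonSp d)) (hP : IsWienerMeasure d P)
    {U : Type*} [MeasurableSpace U] [TopologicalSpace U] [PolishSpace U] [BorelSpace U]
    (ν : ℝ≥0 → CanonSp d → U)
    (hν : Measurable[predictableSigma (fun s => canonFil d s)]
      (fun p : ℝ≥0 × CanonSp d => ν p.1 p.2))
    (η : CanonSp d → ℝ≥0) (hη : IsStoppingTime (canonFil d) (fun ω => (η ω : WithTop ℝ≥0)))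
    (Pw : CanonSp d → Measure (CanonSp d))
    (hPw : IsRCP P hη.measurableSpace Pw) :
    ∀ᵐ w ∂P,
      Pw w {ω | ∀ s : ℝ≥0, ν s ω = ν s (concatPath w (η w) ω)} = 1 :=
  rcp_shifted_control_eq_general P ν η hη Pw hPw
end
end
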